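/- arXiv:1209.6340 — 2 statements merged into one kernel-verified Lean document; each statement's English description precedes it below -/
import Mathlib

section
/- Let H and H' be nonzero finite-dimensional complex inner product spaces, let B : H → H and A : H' → H' be self-adjoint linear maps, and list their eigenvalues with multiplicity in increasing order: λ_1^B ≤ … ≤ λ_{dim H}^B and λ_1^A ≤ … ≤ λ_{dim H'}^A. Let E ∈ ℝ and let Π : H → H be the orthogonal projection onto the span of the eigenvectors of B with eigenvalue at most E. Let U : H → H' be a linear map and suppose there exist constants C > 0 and c ∈ (0,1) such that ‖(U* A U − B) ∘ Π‖ ≤ C and ‖U* U ∘ Π − Π‖ ≤ c in operator norm, where U* denotes the adjoint of U. Then for every index j with 1 ≤ j ≤ dim H, λ_j^B ≤ E, and λ_j^B + C ≥ 0, one has j ≤ dim H' and λ_j^A ≤ (λ_j^B + C)(1 + c/(1−c)). -/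
/-!
Let `V` be the span of the first `j + 1` eigenvectors of `B`. It lies in the range of `Π`, so on
`V` the two hypotheses give `re ⟪U x, A (U x)⟫ ≤ re ⟪x, B x⟫ + C ‖x‖² ≤ (λⱼ(B) + C) ‖x‖²` and
`‖U x‖² ≥ (1 - c) ‖x‖²`. Hence `U` is injective on `V`, and on the `(j + 1)`-dimensional space
`U V` the Rayleigh quotient of `A` is at most `(λⱼ(B) + C) / (1 - c)` (this needs
`λⱼ(B) + C ≥ 0`). By dimension counting, `U V` contains a nonzero vector orthogonal to the first
`j` eigenvectors of `A`, where the Rayleigh quotient of `A` is at least `λⱼ(A)`.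
-/

open scoped InnerProductSpace
open RCLike Module Submodule

section Eigenbasis

variable {𝕜 E : Type*} [RCLike 𝕜] [NormedAddCommGroup E] [InnerProductSpace 𝕜 E] {ι : Type*}

theorem Orthonormal.inner_eq_zero_of_mem_span_image {v : ι → E} (hv : Orthonormal 𝕜 v)
    {s : Set ι} {i : ι} (hi : i ∉ s) {x : E} (hx : x ∈ span 𝕜 (v '' s)) : ⟪v i, x⟫_𝕜 = 0 := by
  refine mem_orthogonal_singleton_iff_inner_right.1 (span_le.2 ?_ hx)
  rintro _ ⟨l, hl, rfl⟩
  exact mem_orthogonal_singleton_iff_inner_right.2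
    (hv.inner_eq_zero (ne_of_mem_of_not_mem hl hi).symm)

theorem OrthonormalBasis.finrank_span_image_Iic {n : ℕ} (v : OrthonormalBasis (Fin n) 𝕜 E)
    (j : Fin n) : finrank 𝕜 (span 𝕜 (v '' Set.Iic j)) = j + 1 := by
  rw [Set.image_eq_range]
  refine (finrank_span_eq_card (v.orthonormal.comp ((↑) : Set.Iic j → Fin n)
    Subtype.val_injective).linearIndependent).trans ?_
  simp only [Fintype.card_subtype, Set.mem_Iic, Finset.filter_ge_eq_Iic, Fin.card_Iic]

theorem span_image_le_iSup_eigenspace {v : ι → E} {T : E →ₗ[𝕜] E} {lam : ι → ℝ}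
    (hv : ∀ i, T (v i) = (lam i : 𝕜) • v i) {s : Set ι} {c : ℝ} (hs : ∀ i ∈ s, lam i ≤ c) :
    span 𝕜 (v '' s) ≤ ⨆ (μ : ℝ) (_ : μ ≤ c), Module.End.eigenspace T (μ : 𝕜) := by
  rw [span_le]
  rintro _ ⟨i, hi, rfl⟩
  exact mem_iSup_of_mem (lam i) (mem_iSup_of_mem (hs i hi)
    (Module.End.mem_eigenspace_iff.2 (hv i)))

variable [Fintype ι]

theorem OrthonormalBasis.inner_apply_of_eigen (v : OrthonormalBasis ι 𝕜 E) {T : E →ₗ[𝕜] E}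
    {lam : ι → ℝ} (hv : ∀ i, T (v i) = (lam i : 𝕜) • v i) (i : ι) (x : E) :
    ⟪v i, T x⟫_𝕜 = lam i * ⟪v i, x⟫_𝕜 := by
  classical
  conv_lhs => rw [← v.sum_repr' x]
  simp only [map_sum, map_smul, hv, smul_smul]
  rw [v.orthonormal.inner_right_fintype]
  ring

theorem OrthonormalBasis.re_inner_self_apply_eq_sum (v : OrthonormalBasis ι 𝕜 E)
    {T : E →ₗ[𝕜] E} {lam : ι → ℝ} (hv : ∀ i, T (v i) = (lam i : 𝕜) • v i) (x : E) :
    re ⟪x, T x⟫_𝕜 = ∑ i, lam i * ‖⟪v i, x⟫_𝕜‖ ^ 2 := by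
  rw [← v.sum_inner_mul_inner, map_sum]
  refine Finset.sum_congr rfl fun i _ => ?_
  rw [v.inner_apply_of_eigen hv, ← inner_conj_symm, mul_left_comm, RCLike.conj_mul]
  norm_cast

section Monotone

variable [LinearOrder ι] (v : OrthonormalBasis ι 𝕜 E) {T : E →ₗ[𝕜] E} {lam : ι → ℝ}
  (hv : ∀ i, T (v i) = (lam i : 𝕜) • v i) (hm : Monotone lam) {j : ι} {x : E}
include hv hm

theorem OrthonormalBasis.re_inner_self_apply_le (hx : ∀ i, j < i → ⟪v i, x⟫_𝕜 = 0) :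
    re ⟪x, T x⟫_𝕜 ≤ lam j * ‖x‖ ^ 2 := by
  rw [v.re_inner_self_apply_eq_sum hv, ← v.sum_sq_norm_inner_right, Finset.mul_sum]
  refine Finset.sum_le_sum fun i _ => ?_
  rcases le_or_gt i j with hij | hij
  · exact mul_le_mul_of_nonneg_right (hm hij) (by positivity)
  · simp [hx i hij]

theorem OrthonormalBasis.le_re_inner_self_apply (hx : ∀ i, i < j → ⟪v i, x⟫_𝕜 = 0) :
    lam j * ‖x‖ ^ 2 ≤ re ⟪x, T x⟫_𝕜 := by
  rw [v.re_inner_self_apply_eq_sum hv, ← v.sum_sq_norm_inner_right, Finset.mul_sum]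
  refine Finset.sum_le_sum fun i _ => ?_
  rcases le_or_gt j i with hij | hij
  · exact mul_le_mul_of_nonneg_right (hm hij) (by positivity)
  · simp [hx i hij]

end Monotone

end Eigenbasis

theorem Submodule.finrank_map_eq_of_disjoint_ker {K V V₂ : Type*} [DivisionRing K]
    [AddCommGroup V] [Module K V] [AddCommGroup V₂] [Module K V₂] {p : Submodule K V}
    {f : V →ₗ[K] V₂} (h : Disjoint p (LinearMap.ker f)) : finrank K (p.map f) = finrank K p := by
  rw [← LinearMap.range_domRestrict]
  refine LinearMap.finrank_range_of_inj ?_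
  rw [← LinearMap.ker_eq_bot, LinearMap.ker_domRestrict]
  exact disjoint_iff_comap_eq_bot.1 h

/-- The easy half of the Courant–Fischer min-max principle. -/
theorem OrthonormalBasis.exists_lt_and_le_of_lt_finrank {𝕜 E : Type*} [RCLike 𝕜]
    [NormedAddCommGroup E] [InnerProductSpace 𝕜 E] [FiniteDimensional 𝕜 E] {n : ℕ}
    (v : OrthonormalBasis (Fin n) 𝕜 E) {T : E →ₗ[𝕜] E} {lam : Fin n → ℝ}
    (hv : ∀ i, T (v i) = (lam i : 𝕜) • v i) (hm : Monotone lam) {W : Submodule 𝕜 E} {k : ℕ}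
    (hk : k < finrank 𝕜 W) {μ : ℝ} (hW : ∀ y ∈ W, re ⟪y, T y⟫_𝕜 ≤ μ * ‖y‖ ^ 2) :
    ∃ hkn : k < n, lam ⟨k, hkn⟩ ≤ μ := by
  have hkn : k < n :=
    hk.trans_le (by simpa [finrank_eq_card_basis v.toBasis] using W.finrank_le)
  refine ⟨hkn, ?_⟩
  let f : W →ₗ[𝕜] Fin k → 𝕜 :=
    LinearMap.pi fun i => (innerₛₗ 𝕜 (v (Fin.castLE hkn.le i))).comp W.subtype
  obtain ⟨y, hyker, hy0⟩ := exists_mem_ne_zero_of_ne_bot <|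
    LinearMap.ker_ne_bot_of_finrank_lt (f := f) (by simpa using hk)
  have hyorth : ∀ i : Fin n, i < ⟨k, hkn⟩ → ⟪v i, (y : E)⟫_𝕜 = 0 := fun i hi =>
    congrFun (LinearMap.mem_ker.1 hyker) ⟨i, hi⟩
  have hypos : 0 < ‖(y : E)‖ ^ 2 := by
    have : (y : E) ≠ 0 := by simpa using hy0
    positivity
  exact le_of_mul_le_mul_right
    ((v.le_re_inner_self_apply hv hm hyorth).trans (hW y y.2)) hypos

section Intertwining

variable {𝕜 E F : Type*} [RCLike 𝕜] [NormedAddCommGroup E] [InnerProductSpace 𝕜 E]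
  [NormedAddCommGroup F] [InnerProductSpace 𝕜 F]

theorem abs_re_inner_self_apply_le (T : E →L[𝕜] E) (x : E) :
    |re ⟪x, T x⟫_𝕜| ≤ ‖T‖ * ‖x‖ ^ 2 :=
  calc |re ⟪x, T x⟫_𝕜| ≤ ‖x‖ * ‖T x‖ := (abs_re_le_norm _).trans (norm_inner_le_norm _ _)
    _ ≤ ‖x‖ * (‖T‖ * ‖x‖) := by gcongr; exact T.le_opNorm x
    _ = ‖T‖ * ‖x‖ ^ 2 := by ring

variable [CompleteSpace E] [CompleteSpace F] (U : E →L[𝕜] F) {P : E →L[𝕜] E} {x : E}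

theorem ContinuousLinearMap.re_inner_apply_apply_le_of_apply_eq_self (A : F →L[𝕜] F)
    (B : E →L[𝕜] E) (hx : P x = x) :
    re ⟪U x, A (U x)⟫_𝕜 ≤
      re ⟪x, B x⟫_𝕜 + ‖((adjoint U).comp (A.comp U) - B).comp P‖ * ‖x‖ ^ 2 := by
  have hT : ⟪x, (((adjoint U).comp (A.comp U) - B).comp P) x⟫_𝕜 =
      ⟪U x, A (U x)⟫_𝕜 - ⟪x, B x⟫_𝕜 := by
    simp [hx, inner_sub_right, adjoint_inner_right]
  have := (abs_le.1 (abs_re_inner_self_apply_le (((adjoint U).comp (A.comp U) - B).comp P) x)).2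
  rw [hT, map_sub] at this
  linarith

theorem ContinuousLinearMap.mul_norm_sq_le_norm_sq_apply_of_apply_eq_self (hx : P x = x) :
    (1 - ‖((adjoint U).comp U).comp P - P‖) * ‖x‖ ^ 2 ≤ ‖U x‖ ^ 2 := by
  have hT : ⟪x, (((adjoint U).comp U).comp P - P) x⟫_𝕜 = ⟪U x, U x⟫_𝕜 - ⟪x, x⟫_𝕜 := by
    simp [hx, inner_sub_right, adjoint_inner_right]
  have := (abs_le.1 (abs_re_inner_self_apply_le (((adjoint U).comp U).comp P - P) x)).1
  rw [hT, map_sub, inner_self_eq_norm_sq, inner_self_eq_norm_sq] at this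
  linarith

variable {c : ℝ} (h2 : ‖((ContinuousLinearMap.adjoint U).comp U).comp P - P‖ ≤ c) (hc : c < 1)
include h2 hc

theorem ContinuousLinearMap.disjoint_ker_of_forall_apply_eq_self {V : Submodule 𝕜 E}
    (hV : ∀ x ∈ V, P x = x) : Disjoint V (LinearMap.ker (U : E →ₗ[𝕜] F)) := by
  refine LinearMap.disjoint_ker.2 fun x hx hUx => ?_
  have hlow := U.mul_norm_sq_le_norm_sq_apply_of_apply_eq_self (hV x hx)
  rw [ContinuousLinearMap.coe_coe] at hUx
  rw [hUx, norm_zero] at hlow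
  by_contra hx0
  nlinarith [mul_pos (sub_pos.2 (h2.trans_lt hc)) (pow_pos (norm_pos_iff.2 hx0) 2)]

theorem ContinuousLinearMap.re_inner_apply_apply_le_div_mul_norm_sq (A : F →L[𝕜] F)
    (B : E →L[𝕜] E) {C lam : ℝ} (h1 : ‖((adjoint U).comp (A.comp U) - B).comp P‖ ≤ C)
    (hlam : 0 ≤ lam + C) (hx : P x = x) (hBx : re ⟪x, B x⟫_𝕜 ≤ lam * ‖x‖ ^ 2) :
    re ⟪U x, A (U x)⟫_𝕜 ≤ (lam + C) / (1 - c) * ‖U x‖ ^ 2 := by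
  have hc' : 0 < 1 - c := sub_pos.2 hc
  have hlow : (1 - c) * ‖x‖ ^ 2 ≤ ‖U x‖ ^ 2 :=
    (mul_le_mul_of_nonneg_right (sub_le_sub_left h2 1) (sq_nonneg _)).trans
      (U.mul_norm_sq_le_norm_sq_apply_of_apply_eq_self hx)
  calc re ⟪U x, A (U x)⟫_𝕜
      ≤ lam * ‖x‖ ^ 2 + C * ‖x‖ ^ 2 := by
        have := U.re_inner_apply_apply_le_of_apply_eq_self A B hx
        nlinarith [mul_le_mul_of_nonneg_right h1 (sq_nonneg ‖x‖)]
    _ = (lam + C) / (1 - c) * ((1 - c) * ‖x‖ ^ 2) := by field_simp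
    _ ≤ (lam + C) / (1 - c) * ‖U x‖ ^ 2 := by gcongr

end Intertwining

theorem stmt_9_general
    (H H' : Type) [NormedAddCommGroup H] [InnerProductSpace ℂ H]
    [NormedAddCommGroup H'] [InnerProductSpace ℂ H']
    [FiniteDimensional ℂ H] [FiniteDimensional ℂ H']
    (B : H →L[ℂ] H) (A : H' →L[ℂ] H')
    (nB nA : ℕ)
    (lamB : Fin nB → ℝ) (lamA : Fin nA → ℝ)
    (hmB : Monotone lamB) (hmA : Monotone lamA)
    (vB : OrthonormalBasis (Fin nB) ℂ H)
    (hvB : ∀ i, B (vB i) = (lamB i : ℂ) • vB i)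
    (vA : OrthonormalBasis (Fin nA) ℂ H')
    (hvA : ∀ i, A (vA i) = (lamA i : ℂ) • vA i)
    (E C c : ℝ) (hc1 : c < 1)
    (U : H →L[ℂ] H')
    (S : Submodule ℂ H)
    (hS : S = ⨆ (μ : ℝ) (_ : μ ≤ E),
      Module.End.eigenspace (B : H →ₗ[ℂ] H) (μ : ℂ))
    (P : H →L[ℂ] H)
    (hP : P = S.subtypeL.comp (S.orthogonalProjectionOnto))
    (h1 : ‖((ContinuousLinearMap.adjoint U).comp (A.comp U) - B).comp P‖ ≤ C)
    (h2 : ‖((ContinuousLinearMap.adjoint U).comp U).comp P - P‖ ≤ c) :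
    ∀ j : Fin nB, lamB j ≤ E → 0 ≤ lamB j + C →
      ∃ hj : (j : ℕ) < nA,
        lamA ⟨(j : ℕ), hj⟩ ≤ (lamB j + C) * (1 + c / (1 - c)) := by
  intro j hjE hjC
  set V := span ℂ (vB '' Set.Iic j)
  have hVS : V ≤ S := hS ▸ span_image_le_iSup_eigenspace hvB fun i hi => (hmB hi).trans hjE
  have hPV : ∀ x ∈ V, P x = x := fun x hx => by
    rw [hP]
    exact S.starProjection_eq_self_iff.2 (hVS hx)
  have hdim : (j : ℕ) < finrank ℂ (V.map (U : H →ₗ[ℂ] H')) := by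
    rw [finrank_map_eq_of_disjoint_ker (U.disjoint_ker_of_forall_apply_eq_self h2 hc1 hPV),
      vB.finrank_span_image_Iic]
    omega
  obtain ⟨hjA, hle⟩ := vA.exists_lt_and_le_of_lt_finrank hvA hmA hdim <| by
    rintro _ ⟨x, hx, rfl⟩
    refine U.re_inner_apply_apply_le_div_mul_norm_sq h2 hc1 A B h1 hjC (hPV x hx) ?_
    exact vB.re_inner_self_apply_le hvB hmB fun i hi =>
      vB.orthonormal.inner_eq_zero_of_mem_span_image (s := Set.Iic j) (not_le.2 hi) hx
  have hc : 1 - c ≠ 0 := (sub_pos.2 hc1).ne'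
  exact ⟨hjA, hle.trans_eq (by field_simp; ring)⟩

/-- Min-max comparison lemma for the low-lying eigenvalues of two self-adjoint
operators on nonzero finite-dimensional complex inner product spaces, intertwined by
an approximately unitary map.  The eigenvalues `lamB`, `lamA` are listed in increasing
order with multiplicity (encoded by orthonormal eigenbases), `P` is the spectral
projection of `B` onto energies `≤ E`. -/
theorem stmt_9
    (H H' : Type) [NormedAddCommGroup H] [InnerProductSpace ℂ H]
    [NormedAddCommGroup H'] [InnerProductSpace ℂ H']
    [FiniteDimensional ℂ H] [FiniteDimensional ℂ H']
    [Nontrivial H] [Nontrivial H']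
    (B : H →L[ℂ] H) (A : H' →L[ℂ] H')
    (hB : IsSelfAdjoint B) (hA : IsSelfAdjoint A)
    (nB nA : ℕ) (hnB : Module.finrank ℂ H = nB) (hnA : Module.finrank ℂ H' = nA)
    (lamB : Fin nB → ℝ) (lamA : Fin nA → ℝ)
    (hmB : Monotone lamB) (hmA : Monotone lamA)
    (vB : OrthonormalBasis (Fin nB) ℂ H)
    (hvB : ∀ i, B (vB i) = (lamB i : ℂ) • vB i)
    (vA : OrthonormalBasis (Fin nA) ℂ H')
    (hvA : ∀ i, A (vA i) = (lamA i : ℂ) • vA i)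
    (E C c : ℝ) (hC : 0 < C) (hc0 : 0 < c) (hc1 : c < 1)
    (U : H →L[ℂ] H')
    (S : Submodule ℂ H)
    (hS : S = ⨆ (μ : ℝ) (_ : μ ≤ E),
      Module.End.eigenspace (B : H →ₗ[ℂ] H) (μ : ℂ))
    (P : H →L[ℂ] H)
    (hP : P = S.subtypeL.comp (S.orthogonalProjectionOnto))
    (h1 : ‖((ContinuousLinearMap.adjoint U).comp (A.comp U) - B).comp P‖ ≤ C)
    (h2 : ‖((ContinuousLinearMap.adjoint U).comp U).comp P - P‖ ≤ c) :
    ∀ j : Fin nB, lamB j ≤ E → 0 ≤ lamB j + C →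
      ∃ hj : (j : ℕ) < nA,
        lamA ⟨(j : ℕ), hj⟩ ≤ (lamB j + C) * (1 + c / (1 - c)) :=
  stmt_9_general H H' B A nB nA lamB lamA hmB hmA vB hvB vA hvA E C c hc1 U S hS P hP h1 h2
end

section
/- There exist a real number E⁰ > 0 and an integer k₀ ≥ 1 such that for every integer k ≥ k₀, all eigenvalues of the Harper matrix H_k lying in the interval [−4, −4 + E⁰] are simple: if j ≠ j' and both λ_k^{(j)} ≤ −4 + E⁰ and λ_k^{(j')} ≤ −4 + E⁰, then λ_k^{(j)} ≠ λ_k^{(j')}. -/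
/-!
An eigenvector `X` of `H_k` with eigenvalue `λ` is a `2k`-periodic solution of
`X (n + 2) = (λ - 2 cos (n π / k)) X (n + 1) - X n`, and after the gauge change `(-1) ^ n` of
`y (n + 2) = (2 cos (n π / k) - λ) y (n + 1) - y n`. For `λ ≤ -4 + 1/100` the coefficient is
at least `2` outside the well `(k - d, k + d)` (mod `2k`), `d ≈ k / 20`, and at least `3` near
`n = 2k`, so the solution launched from `(0, 1)` at `k + d` grows monotonically, by a factor
`2 ^ (k / 2)`, up to `3k - d`. As `|2 cos - λ| ≤ 6`, it shrinks by at most `7 ^ (2d + 1)` in the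
remaining steps to `k + d + 2k`, hence cannot be periodic. So no eigenvector vanishes at `k + d`:
evaluation there is injective on each eigenspace, which therefore has dimension at most one.
-/

/-- The Harper matrix: the `2k × 2k` matrix of the Toeplitz operator quantizing
the Harper Hamiltonian `2(cos 2πp + cos 2πq)` on the torus. -/
noncomputable def harper (k : ℕ) : Matrix (Fin (2 * k)) (Fin (2 * k)) ℂ := fun i j =>
  (if j = i then ((2 * Real.cos ((i : ℕ) * Real.pi / (k : ℝ)) : ℝ) : ℂ) else 0) +
  (if ((j : ℕ) : ZMod (2 * k)) = ((i : ℕ) : ZMod (2 * k)) + 1 then 1 else 0) +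
  (if ((j : ℕ) : ZMod (2 * k)) = ((i : ℕ) : ZMod (2 * k)) - 1 then 1 else 0)

/-- `lam` is the list of eigenvalues of the (Hermitian) Harper matrix, in
increasing order and with multiplicity: it is monotone and there is a basis of
eigenvectors realizing it. -/
def HarperSortedEigs (k : ℕ) (lam : Fin (2 * k) → ℝ) : Prop :=
  Monotone lam ∧ ∃ b : Module.Basis (Fin (2 * k)) ℂ (Fin (2 * k) → ℂ),
    ∀ j, (harper k).mulVec (b j) = (lam j : ℂ) • b j

open Real Matrix Fin.NatCast

def IsThreeTermSolution {R : Type*} [Ring R] (a y : ℕ → R) : Prop :=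
  ∀ n, y (n + 2) = a (n + 1) * y (n + 1) - y n

namespace IsThreeTermSolution

section CommRing

variable {R : Type*} [CommRing R] {a y : ℕ → R}

theorem const_mul (h : IsThreeTermSolution a y) (c : R) :
    IsThreeTermSolution a fun n => c * y n := fun n => by
  dsimp only; rw [h n]; ring

theorem neg_one_pow_mul (h : IsThreeTermSolution a y) :
    IsThreeTermSolution (-a) fun n => (-1) ^ n * y n := fun n => by
  dsimp only; rw [h n, Pi.neg_apply, pow_succ, pow_succ]; ring

theorem eq_zero_of_le {m : ℕ} (h : IsThreeTermSolution a y) (h₀ : y m = 0) (h₁ : y (m + 1) = 0)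
    {n : ℕ} (hn : m ≤ n) : y n = 0 := by
  suffices ∀ j, y (m + j) = 0 ∧ y (m + j + 1) = 0 by
    obtain ⟨j, rfl⟩ := Nat.exists_eq_add_of_le hn
    exact (this j).1
  intro j
  induction j with
  | zero => exact ⟨h₀, h₁⟩
  | succ j ih => exact ⟨ih.2, by rw [← add_assoc, h, ih.1, ih.2]; ring⟩

end CommRing

theorem re {a : ℕ → ℝ} {z : ℕ → ℂ} (h : IsThreeTermSolution (fun n => (a n : ℂ)) z) :
    IsThreeTermSolution a fun n => (z n).re := fun n => by
  simp [h n]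

theorem norm_le_two {K : Type*} [NormedField K] {a y : ℕ → K} (h : IsThreeTermSolution a y)
    {n : ℕ} (hmax : ∀ m, ‖y m‖ ≤ ‖y (n + 1)‖) (hne : y (n + 1) ≠ 0) : ‖a (n + 1)‖ ≤ 2 := by
  have hsum : a (n + 1) * y (n + 1) = y (n + 2) + y n := by rw [h n]; ring
  have : ‖a (n + 1)‖ * ‖y (n + 1)‖ ≤ 2 * ‖y (n + 1)‖ := by
    calc ‖a (n + 1)‖ * ‖y (n + 1)‖ = ‖y (n + 2) + y n‖ := by rw [← norm_mul, hsum]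
      _ ≤ ‖y (n + 2)‖ + ‖y n‖ := norm_add_le _ _
      _ ≤ 2 * ‖y (n + 1)‖ := by linarith [hmax (n + 2), hmax n]
  exact le_of_mul_le_mul_right this (norm_pos_iff.2 hne)

section Real

variable {a y : ℕ → ℝ}

theorem growth (h : IsThreeTermSolution a y) {r : ℝ} (hr : 1 ≤ r) {m N : ℕ} (h₀ : 0 ≤ y m)
    (h₁ : y m ≤ y (m + 1)) (hmN : m ≤ N) (ha : ∀ n, m < n → n ≤ N → r + 1 ≤ a n) :
    0 ≤ y N ∧ y N ≤ y (N + 1) ∧ r ^ (N - m) * y (m + 1) ≤ y (N + 1) := by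
  induction N, hmN using Nat.le_induction with
  | base => simpa using ⟨h₀, h₁⟩
  | succ N hmN ih =>
    obtain ⟨hu, huv, hv⟩ := ih fun n hn hnN => ha n hn (by omega)
    have hrv : r * y (N + 1) ≤ y (N + 1 + 1) := by
      have := ha (N + 1) (by omega) le_rfl
      rw [h N]; nlinarith
    refine ⟨by linarith, by nlinarith, ?_⟩
    rw [show N + 1 - m = N - m + 1 by omega, pow_succ', mul_assoc]
    calc r * (r ^ (N - m) * y (m + 1)) ≤ r * y (N + 1) := by gcongr
      _ ≤ y (N + 1 + 1) := hrv

theorem max_abs_le_mul (h : IsThreeTermSolution a y) {C : ℝ} (hC : ∀ n, |a n| ≤ C) (n : ℕ) :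
    max |y n| |y (n + 1)| ≤ (C + 1) * max |y (n + 1)| |y (n + 2)| := by
  have hC₀ : 0 ≤ C := (abs_nonneg _).trans (hC 0)
  have h₁ : |y (n + 1)| ≤ max |y (n + 1)| |y (n + 2)| := le_max_left _ _
  have h₂ : |y (n + 2)| ≤ max |y (n + 1)| |y (n + 2)| := le_max_right _ _
  refine max_le ?_ (by nlinarith [abs_nonneg (y (n + 1))])
  calc |y n| = |a (n + 1) * y (n + 1) - y (n + 2)| := by rw [h n]; ring_nf
    _ ≤ |a (n + 1)| * |y (n + 1)| + |y (n + 2)| := by rw [← abs_mul]; exact abs_sub _ _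
    _ ≤ (C + 1) * max |y (n + 1)| |y (n + 2)| := by
      nlinarith [hC (n + 1), abs_nonneg (a (n + 1)), abs_nonneg (y (n + 1))]

theorem max_abs_le_pow_mul (h : IsThreeTermSolution a y) {C : ℝ} (hC : ∀ n, |a n| ≤ C)
    (r n : ℕ) : max |y n| |y (n + 1)| ≤ (C + 1) ^ r * max |y (n + r)| |y (n + r + 1)| := by
  have hC₁ : 0 ≤ C + 1 := by linarith [(abs_nonneg _).trans (hC 0)]
  induction r generalizing n with
  | zero => simp
  | succ r ih =>
    calc max |y n| |y (n + 1)| ≤ (C + 1) * max |y (n + 1)| |y (n + 2)| := h.max_abs_le_mul hC n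
      _ ≤ (C + 1) * ((C + 1) ^ r * max |y (n + 1 + r)| |y (n + 1 + r + 1)|) := by
        gcongr; exact ih (n + 1)
      _ = (C + 1) ^ (r + 1) * max |y (n + (r + 1))| |y (n + (r + 1) + 1)| := by
        rw [show n + 1 + r = n + (r + 1) by omega]; ring

end Real

end IsThreeTermSolution

theorem neg_cos_le_cos_of_abs_le {ε t : ℝ} (hε : 0 ≤ ε) (ht : |t| ≤ π - ε) : -cos ε ≤ cos t := by
  rw [← cos_abs t, ← cos_pi_sub]
  exact cos_le_cos_of_nonneg_of_le_pi (abs_nonneg t) (by linarith) ht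

theorem cos_mul_pi_div_eq_cos_sub_two_mul (p : ℝ) (k : ℕ) :
    cos (p * π / k) = cos ((p - 2 * k) * π / k) := by
  rcases eq_or_ne k 0 with rfl | hk
  · simp
  rw [← cos_sub_two_pi]
  congr 1
  field_simp

section HarperCoefficient

variable {k : ℕ} {lam : ℝ}

/-- `2 cos (p π / k) + 2 ≥ 2 - 2 cos ((d + 1) π / k) ≥ 1 / 100` by `cos_le_one_sub_mul_cos_sq`. -/
theorem two_le_harper_coeff {d p : ℕ} (hd : k ≤ 20 * (d + 1)) (hdk : d + 1 ≤ k)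
    (hp : k + d + 1 ≤ p) (hp' : p + d + 1 ≤ 3 * k) (hlam : lam ≤ -4 + 1 / 100) :
    2 ≤ 2 * cos (p * π / k) - lam := by
  have hk : (0 : ℝ) < k := by exact_mod_cast (show 0 < k by omega)
  set ε : ℝ := (d + 1) * π / k with hε_def
  have hε : π / 20 ≤ ε := by
    rw [hε_def, le_div_iff₀ hk]
    have : (k : ℝ) ≤ 20 * (d + 1) := by exact_mod_cast hd
    nlinarith [pi_pos]
  have hεπ : ε ≤ π := by
    rw [hε_def, div_le_iff₀ hk]
    have : (d : ℝ) + 1 ≤ k := by exact_mod_cast hdk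
    nlinarith [pi_pos]
  have ht : |((p : ℝ) - 2 * k) * π / k| ≤ π - ε := by
    have hp₁ : (k : ℝ) + d + 1 ≤ p := by exact_mod_cast hp
    have hp₂ : (p : ℝ) + d + 1 ≤ 3 * k := by exact_mod_cast hp'
    have habs : |(p : ℝ) - 2 * k| ≤ k - d - 1 := abs_le.2 ⟨by linarith, by linarith⟩
    rw [abs_div, abs_mul, abs_of_pos pi_pos, abs_of_pos hk,
      show π - ε = (k - d - 1) * π / k by rw [hε_def]; field_simp; ring]
    gcongr
  have hcos_ε : cos ε ≤ 1 - 1 / 200 := by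
    have hsq : π ^ 2 / 400 ≤ ε ^ 2 := by nlinarith [pi_pos]
    have : 1 / 200 ≤ 2 / π ^ 2 * ε ^ 2 := by
      rw [div_mul_eq_mul_div, le_div_iff₀ (by positivity)]; linarith
    linarith [cos_le_one_sub_mul_cos_sq (abs_le.2 ⟨by linarith [pi_pos], hεπ⟩)]
  have := neg_cos_le_cos_of_abs_le (by linarith [pi_pos]) ht
  rw [cos_mul_pi_div_eq_cos_sub_two_mul]
  linarith

theorem three_le_harper_coeff (hk : 0 < k) {p : ℕ} (hp : 2 * k ≤ p) (hp' : 2 * p ≤ 5 * k)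
    (hlam : lam ≤ -3) : 3 ≤ 2 * cos (p * π / k) - lam := by
  replace hk : (0 : ℝ) < k := by exact_mod_cast hk
  have hp₁ : 2 * (k : ℝ) ≤ p := by exact_mod_cast hp
  have hp₂ : 2 * (p : ℝ) ≤ 5 * k := by exact_mod_cast hp'
  have hcos : 0 ≤ cos (((p : ℝ) - 2 * k) * π / k) := by
    refine cos_nonneg_of_mem_Icc ⟨?_, ?_⟩
    · have : 0 ≤ ((p : ℝ) - 2 * k) * π / k := by
        apply div_nonneg (mul_nonneg (by linarith) pi_pos.le) hk.le
      linarith [pi_pos]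
    · rw [div_le_div_iff₀ hk two_pos]; nlinarith [pi_pos]
  rw [cos_mul_pi_div_eq_cos_sub_two_mul]
  linarith

theorem abs_harper_coeff_le (hlam : -4 ≤ lam) (hlam' : lam ≤ 2) (x : ℝ) :
    |2 * cos x - lam| ≤ 6 :=
  abs_le.2 ⟨by linarith [neg_one_le_cos x], by linarith [cos_le_one x]⟩

end HarperCoefficient

theorem harper_solution_one_lt_max_abs {k d : ℕ} (hd : k ≤ 20 * (d + 1)) (hdk : 12 * d + 8 ≤ k)
    {lam : ℝ} (hlam : -4 ≤ lam) (hlam' : lam ≤ -4 + 1 / 100) {y : ℕ → ℝ}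
    (hy : IsThreeTermSolution (fun n => 2 * cos (n * π / k) - lam) y)
    (h₀ : y (k + d) = 0) (h₁ : y (k + d + 1) = 1) :
    1 < max |y (k + d + 2 * k)| |y (k + d + 2 * k + 1)| := by
  have htwo (n : ℕ) (hn : k + d < n) (hn' : n ≤ 3 * k - d - 1) :
      (1 : ℝ) + 1 ≤ 2 * cos (n * π / k) - lam := by
    rw [one_add_one_eq_two]; exact two_le_harper_coeff hd (by omega) hn (by omega) hlam'
  obtain ⟨hpos₁, hmono₁, hgrow₁⟩ := hy.growth le_rfl (by rw [h₀]) (by rw [h₀, h₁]; norm_num)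
    (show k + d ≤ 2 * k - 1 by omega) fun n hn hn' => htwo n hn (by omega)
  obtain ⟨hpos₂, hmono₂, hgrow₂⟩ := hy.growth one_le_two hpos₁ hmono₁
    (show 2 * k - 1 ≤ 2 * k - 1 + k / 2 by omega) fun n hn hn' => by
      rw [two_add_one_eq_three]
      exact three_le_harper_coeff (by omega) (by omega) (by omega) (by linarith)
  obtain ⟨-, -, hgrow₃⟩ := hy.growth le_rfl hpos₂ hmono₂
    (show 2 * k - 1 + k / 2 ≤ 3 * k - d - 1 by omega) fun n hn hn' => htwo n (by omega) hn'
  rw [one_pow, one_mul, h₁] at hgrow₁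
  rw [one_pow, one_mul] at hgrow₃
  rw [Nat.add_sub_cancel_left] at hgrow₂
  have hlarge : (2 : ℝ) ^ (k / 2) ≤ |y (3 * k - d - 1 + 1)| :=
    calc (2 : ℝ) ^ (k / 2) ≤ 2 ^ (k / 2) * y (2 * k - 1 + 1) :=
          le_mul_of_one_le_right (by positivity) hgrow₁
      _ ≤ y (3 * k - d - 1 + 1) := hgrow₂.trans hgrow₃
      _ ≤ |y (3 * k - d - 1 + 1)| := le_abs_self _
  have hback := hy.max_abs_le_pow_mul (abs_harper_coeff_le hlam (by linarith) <| · * π / k)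
    (2 * d + 1) (3 * k - d - 1)
  rw [show 3 * k - d - 1 + (2 * d + 1) = k + d + 2 * k by omega] at hback
  have hpow : (7 : ℝ) ^ (2 * d + 1) < 2 ^ (k / 2) := by
    have : 7 ^ (2 * d + 1) < 2 ^ (k / 2) :=
      calc 7 ^ (2 * d + 1) < 8 ^ (2 * d + 1) := Nat.pow_lt_pow_left (by norm_num) (by omega)
        _ = 2 ^ (3 * (2 * d + 1)) := by rw [pow_mul]; norm_num
        _ ≤ 2 ^ (k / 2) := Nat.pow_le_pow_right two_pos (by omega)
    exact_mod_cast this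
  by_contra! hle
  rw [show (6 : ℝ) + 1 = 7 by norm_num] at hback
  have : (2 : ℝ) ^ (k / 2) ≤ 7 ^ (2 * d + 1) :=
    calc (2 : ℝ) ^ (k / 2) ≤ 7 ^ (2 * d + 1) * max |y (k + d + 2 * k)| |y (k + d + 2 * k + 1)| :=
          hlarge.trans ((le_max_right _ _).trans hback)
      _ ≤ 7 ^ (2 * d + 1) := mul_le_of_le_one_right (by positivity) hle
  exact this.not_gt hpow

theorem Fin.natCast_eq_natCast_iff_zmod {n : ℕ} [NeZero n] (j : Fin n) (m : ℕ) :
    ((j : ℕ) : ZMod n) = m ↔ j = (m : Fin n) := by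
  rw [ZMod.natCast_eq_natCast_iff', Fin.ext_iff, Fin.val_natCast, Nat.mod_eq_of_lt j.isLt]

theorem cos_natCast_mod_mul_pi_div (k n : ℕ) :
    cos (((n % (2 * k) : ℕ) : ℝ) * π / k) = cos (n * π / k) := by
  rcases eq_or_ne k 0 with rfl | hk
  · simp
  conv_rhs => rw [← Nat.mod_add_div n (2 * k)]
  push_cast
  rw [show ((n % (2 * k) : ℕ) + 2 * k * (n / (2 * k) : ℕ) : ℝ) * π / k =
      (n % (2 * k) : ℕ) * π / k + (n / (2 * k) : ℕ) * (2 * π) by field_simp,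
    cos_add_nat_mul_two_pi]

section HarperMatrix

variable {k : ℕ} [NeZero (2 * k)]

theorem harper_mulVec_natCast (X : Fin (2 * k) → ℂ) (n : ℕ) :
    (harper k *ᵥ X) ((n + 1 : ℕ) : Fin (2 * k)) =
      ((2 * cos ((n + 1 : ℕ) * π / k) : ℝ) : ℂ) * X ((n + 1 : ℕ) : Fin (2 * k)) +
        X ((n + 2 : ℕ) : Fin (2 * k)) + X (n : Fin (2 * k)) := by
  have hsucc (j : Fin (2 * k)) : ((j : ℕ) : ZMod (2 * k)) =
      (((n + 1) % (2 * k) : ℕ) : ZMod (2 * k)) + 1 ↔ j = ((n + 2 : ℕ) : Fin (2 * k)) := by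
    rw [ZMod.natCast_mod, ← Fin.natCast_eq_natCast_iff_zmod]
    push_cast; ring_nf
  have hpred (j : Fin (2 * k)) : ((j : ℕ) : ZMod (2 * k)) =
      (((n + 1) % (2 * k) : ℕ) : ZMod (2 * k)) - 1 ↔ j = (n : Fin (2 * k)) := by
    rw [ZMod.natCast_mod, ← Fin.natCast_eq_natCast_iff_zmod]
    push_cast; ring_nf
  simp only [Matrix.mulVec, dotProduct, harper, add_mul, ite_mul, one_mul, zero_mul,
    Finset.sum_add_distrib, hsucc, hpred, Finset.sum_ite_eq', Finset.mem_univ, if_true,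
    Fin.val_natCast, cos_natCast_mod_mul_pi_div]

theorem harper_isThreeTermSolution {lam : ℝ} {X : Fin (2 * k) → ℂ}
    (hX : harper k *ᵥ X = (lam : ℂ) • X) :
    IsThreeTermSolution (fun n => ((lam - 2 * cos (n * π / k) : ℝ) : ℂ)) fun n : ℕ => X n :=
  fun n => by
  have h := congrFun hX ((n + 1 : ℕ) : Fin (2 * k))
  rw [harper_mulVec_natCast, Pi.smul_apply, smul_eq_mul] at h
  push_cast at h ⊢
  linear_combination h

theorem neg_four_le_of_harper_mulVec_eq {lam : ℝ} {X : Fin (2 * k) → ℂ}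
    (hX : harper k *ᵥ X = (lam : ℂ) • X) (hX0 : X ≠ 0) : -4 ≤ lam := by
  obtain ⟨i, hi⟩ := Finite.exists_max fun j => ‖X j‖
  have hk : 0 < 2 * k := Nat.pos_of_neZero _
  have hcast : ((i + (2 * k - 1) + 1 : ℕ) : Fin (2 * k)) = i := by
    ext
    rw [Fin.val_natCast, show (i : ℕ) + (2 * k - 1) + 1 = i + 2 * k by omega, Nat.add_mod_right,
      Nat.mod_eq_of_lt i.isLt]
  have hne : X i ≠ 0 := fun h => hX0 <| funext fun j => norm_le_zero_iff.1 (by simpa [h] using hi j)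
  have := (harper_isThreeTermSolution hX).norm_le_two (n := i + (2 * k - 1))
    (by simpa only [hcast] using fun m => hi _) (by simpa only [hcast] using hne)
  rw [Complex.norm_real, Real.norm_eq_abs] at this
  linarith [(abs_le.1 this).1, neg_one_le_cos ((i + (2 * k - 1) + 1 : ℕ) * π / k)]

theorem eq_zero_of_harper_mulVec_eq_of_apply_eq_zero {d : ℕ} (hd : k ≤ 20 * (d + 1))
    (hdk : 12 * d + 8 ≤ k) {lam : ℝ} (hlam : lam ≤ -4 + 1 / 100) {X : Fin (2 * k) → ℂ}
    (hX : harper k *ᵥ X = (lam : ℂ) • X) (hXs : X ((k + d : ℕ) : Fin (2 * k)) = 0) : X = 0 := by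
  by_contra hX0
  have hx := harper_isThreeTermSolution hX
  have hper (n : ℕ) : X ((n + 2 * k : ℕ) : Fin (2 * k)) = X n := by simp
  have hXs₁ : X ((k + d + 1 : ℕ) : Fin (2 * k)) ≠ 0 := fun h => hX0 <| funext fun i => by
    have hi : ((i + 2 * k * (k + d) : ℕ) : Fin (2 * k)) = i := by
      rw [Fin.ext_iff, Fin.val_natCast, Nat.add_mul_mod_self_left, Nat.mod_eq_of_lt i.isLt]
    rw [← hi]
    exact hx.eq_zero_of_le hXs h (le_add_left (Nat.le_mul_of_pos_left _ (by omega)))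
  set D : ℂ := (-1) ^ (k + d + 1) * X ((k + d + 1 : ℕ) : Fin (2 * k))
  have hD : D ≠ 0 := mul_ne_zero (pow_ne_zero _ (by norm_num)) hXs₁
  have hz : IsThreeTermSolution (fun n => ((2 * cos (n * π / k) - lam : ℝ) : ℂ))
      fun n => D⁻¹ * ((-1) ^ n * X n) := by
    have hcoeff : (fun n : ℕ => ((2 * cos (n * π / k) - lam : ℝ) : ℂ)) =
        -fun n : ℕ => ((lam - 2 * cos (n * π / k) : ℝ) : ℂ) := by
      ext n; simp only [Pi.neg_apply]; push_cast; ring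
    rw [hcoeff]
    exact hx.neg_one_pow_mul.const_mul D⁻¹
  set y : ℕ → ℝ := fun n => (D⁻¹ * ((-1) ^ n * X n)).re
  have hy₀ : y (k + d) = 0 := by simp only [y, hXs, mul_zero, Complex.zero_re]
  have hy₁ : y (k + d + 1) = 1 := by
    show (D⁻¹ * D).re = 1
    rw [inv_mul_cancel₀ hD, Complex.one_re]
  have hyper (n : ℕ) : y (n + 2 * k) = y n := by
    simp only [y, hper, pow_add, pow_mul, neg_one_sq, one_pow, mul_one]
  have key : 1 < max |y (k + d + 2 * k)| |y (k + d + 2 * k + 1)| :=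
    harper_solution_one_lt_max_abs hd hdk (neg_four_le_of_harper_mulVec_eq hX hX0) hlam hz.re
      hy₀ hy₁
  rw [show k + d + 2 * k + 1 = k + d + 1 + 2 * k by ring, hyper, hyper, hy₀, hy₁] at key
  norm_num at key

end HarperMatrix

theorem Submodule.eq_of_linearIndepOn_pair {K M ι : Type*} [Field K] [AddCommGroup M]
    [Module K M] (S : Submodule K M) (φ : M →ₗ[K] K) (hφ : ∀ v ∈ S, φ v = 0 → v = 0)
    {f : ι → M} {i j : ι} (hf : LinearIndepOn K f {i, j}) (hi : f i ∈ S) (hj : f j ∈ S) :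
    i = j := by
  by_contra hij
  have hpair := (LinearIndepOn.pair_iff f hij).1 hf
  have hv : φ (f j) • f i + (-φ (f i)) • f j = 0 :=
    hφ _ (S.add_mem (S.smul_mem _ hi) (S.smul_mem _ hj)) (by simp [mul_comm])
  have hfi : f i = 0 := hφ _ hi (neg_eq_zero.1 (hpair _ _ hv).2)
  exact one_ne_zero (hpair 1 0 (by simp [hfi])).1

/-- For `k` large, all eigenvalues of the Harper matrix in `[−4, −4 + E⁰]` are simple. -/
theorem stmt_15 :
    ∃ E0 : ℝ, 0 < E0 ∧ ∃ k₀ : ℕ, 1 ≤ k₀ ∧ ∀ k : ℕ, k₀ ≤ k →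
      ∀ lam : Fin (2 * k) → ℝ, HarperSortedEigs k lam →
        ∀ j j' : Fin (2 * k), j ≠ j' →
          lam j ≤ -4 + E0 → lam j' ≤ -4 + E0 → lam j ≠ lam j' := by
  refine ⟨1 / 100, by norm_num, 20, by norm_num, fun k hk lam hlam j j' hjj' hj _ hlamj => hjj' ?_⟩
  obtain ⟨-, b, hb⟩ := hlam
  have : NeZero (2 * k) := ⟨by omega⟩
  have hmem (i : Fin (2 * k)) (hi : lam i = lam j) :
      b i ∈ Module.End.eigenspace (toLin' (harper k)) (lam j : ℂ) := by
    rw [Module.End.mem_eigenspace_iff, toLin'_apply, ← hi]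
    exact hb i
  refine Submodule.eq_of_linearIndepOn_pair _ (LinearMap.proj ((k + k / 20 : ℕ) : Fin (2 * k)))
    (fun v hv hv₀ => ?_) (b.linearIndependent.linearIndepOn _) (hmem j rfl) (hmem j' hlamj.symm)
  rw [Module.End.mem_eigenspace_iff, toLin'_apply] at hv
  exact eq_zero_of_harper_mulVec_eq_of_apply_eq_zero (by omega) (by omega) hj hv hv₀
end
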